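/- arXiv:2502.01156 — 2 statements merged into one kernel-verified Lean document; each statement's English description precedes it below -/
import Mathlib

section
/- Let L ≥ 1 and let θ = (W̃_1,…,W̃_L) and θ' = (W̃'_1,…,W̃'_L) be parameters of two ReLU networks with the same architecture (L, (N_0,…,N_L)) and with identical biases (the last columns of W̃_ℓ and W̃'_ℓ coincide for every ℓ). Assume that for every ℓ = 1,…,L one has ‖W̃_ℓ‖_{op,∞} ≤ r_ℓ and ‖W̃'_ℓ‖_{op,∞} ≤ r_ℓ, where r_ℓ > 0. Then for every D > 0, sup over x ∈ [−D,D]^{N_0} of ‖R_θ(x̃) − R_{θ'}(x̃)‖_∞ is at most max(D,1) · (Σ_{ℓ=1}^L N_{ℓ−1}) · M · ‖θ − θ'‖_∞, where M := max_{l=1,…,L} max_{i=1,…,max(l−1,1)} ∏_{j=i, j≠l}^{L} r_j (so that for l = 1 the inner maximum is the single product ∏_{j=2}^{L} r_j). -/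
/-!
Write `y_ℓ, y'_ℓ` for the activations of the two networks. Since ReLU is 1-Lipschitz and
vanishes at `0`, one layer gives `‖y'_{ℓ+1}‖ ≤ r_ℓ · max(‖y'_ℓ‖, 1)` and, the biases being equal,
`‖y_{ℓ+1} - y'_{ℓ+1}‖ ≤ r_ℓ ‖y_ℓ - y'_ℓ‖ + N_ℓ ε ‖y'_ℓ‖` with `ε = ‖θ - θ'‖∞`. Unrolling the first
recursion bounds `‖y'_l‖` by `max(‖x‖, 1)` times the largest product `r_i ⋯ r_{l-1}`; unrolling
the second expresses the error as a sum over `l` of `N_l ε ‖y'_l‖ r_{l+1} ⋯ r_{L-1}`, and each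
resulting product `r_i ⋯ r_{L-1}` with `r_l` omitted is one of the products maximised in `M`.
-/

/-- The ℓ∞ operator norm of a real matrix: `sup_{‖x‖∞ = 1} ‖Ax‖∞`
(the norm on `n → ℝ` is the sup norm). -/
noncomputable def opNormInf {m n : Type*} [Fintype m] [Fintype n] (A : Matrix m n ℝ) : ℝ :=
  sSup ((fun x : n → ℝ => ‖A.mulVec x‖) '' {x | ‖x‖ = 1})

/-- Realization of a network with biases: layer `ℓ` (0-indexed) has augmented weight matrix
`W ℓ ∈ ℝ^{N (ℓ+1) × (N ℓ + 1)}` whose last column is the bias; the input of each layer is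
augmented with a final coordinate equal to `1`, and the activation `σ` is applied
componentwise. -/
noncomputable def realizeAug (σ : ℝ → ℝ) (N : ℕ → ℕ)
    (W : ∀ ℓ : ℕ, Matrix (Fin (N (ℓ + 1))) (Fin (N ℓ + 1)) ℝ) :
    (L : ℕ) → (Fin (N 0) → ℝ) → Fin (N L) → ℝ
  | 0, x => x
  | L + 1, x => fun i => σ ((W L).mulVec (Fin.snoc (realizeAug σ N W L x) 1) i)

/-- `‖θ - θ'‖∞`: the maximum over the first `L` layers and all entries of the absolute
entrywise difference of the parameters. -/
noncomputable def paramDistAug (N : ℕ → ℕ) (L : ℕ)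
    (W W' : ∀ ℓ : ℕ, Matrix (Fin (N (ℓ + 1))) (Fin (N ℓ + 1)) ℝ) : ℝ :=
  sSup {c : ℝ | ∃ ℓ < L, ∃ i j, c = |W ℓ i j - W' ℓ i j|}

open Matrix

section Matrix

variable {m n : Type*} [Fintype m] [Fintype n]

theorem opNormInf_nonneg (A : Matrix m n ℝ) : 0 ≤ opNormInf A :=
  Real.sSup_nonneg (by rintro _ ⟨x, -, rfl⟩; exact norm_nonneg _)

attribute [local instance] Matrix.linftyOpSeminormedAddCommGroup in
theorem norm_mulVec_le_opNormInf_mul (A : Matrix m n ℝ) (v : n → ℝ) :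
    ‖A *ᵥ v‖ ≤ opNormInf A * ‖v‖ := by
  rcases eq_or_ne v 0 with rfl | hv
  · simp
  have hbdd : BddAbove ((fun x : n → ℝ => ‖A *ᵥ x‖) '' {x | ‖x‖ = 1}) := by
    refine ⟨‖A‖, ?_⟩
    rintro _ ⟨x, hx, rfl⟩
    simpa [show ‖x‖ = 1 from hx] using A.linfty_opNorm_mulVec x
  have hunit : ‖A *ᵥ ((‖v‖⁻¹ : ℝ) • v)‖ ≤ opNormInf A :=
    le_csSup hbdd ⟨_, norm_smul_inv_norm hv, rfl⟩
  rwa [Matrix.mulVec_smul, norm_smul, norm_inv, norm_norm,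
    inv_mul_le_iff₀ (norm_pos_iff.2 hv), mul_comm] at hunit

theorem norm_mulVec_le_of_abs_le {C : Matrix m n ℝ} {ε : ℝ} (hε : 0 ≤ ε)
    (hC : ∀ i j, |C i j| ≤ ε) (v : n → ℝ) :
    ‖C *ᵥ v‖ ≤ Fintype.card n * ε * ‖v‖ := by
  refine (pi_norm_le_iff_of_nonneg (by positivity)).2 fun i => ?_
  calc ‖(C *ᵥ v) i‖ ≤ ∑ j, ‖C i j * v j‖ := norm_sum_le _ _
    _ ≤ ∑ _j : n, ε * ‖v‖ := Finset.sum_le_sum fun j _ => by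
        rw [norm_mul, Real.norm_eq_abs]
        exact mul_le_mul (hC i j) (norm_le_pi_norm v j) (norm_nonneg _) hε
    _ = Fintype.card n * ε * ‖v‖ := by simp [mul_assoc]

end Matrix

section Snoc

variable {k : ℕ}

theorem norm_snoc_le (v : Fin k → ℝ) (a : ℝ) :
    ‖(Fin.snoc v a : Fin (k + 1) → ℝ)‖ ≤ max ‖v‖ ‖a‖ := by
  refine (pi_norm_le_iff_of_nonneg (le_max_of_le_right (norm_nonneg a))).2 fun i => ?_
  induction i using Fin.lastCases with
  | last => simp
  | cast j => simpa using (norm_le_pi_norm v j).trans (le_max_left _ _)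

theorem snoc_sub_snoc (u v : Fin k → ℝ) (a b : ℝ) :
    (Fin.snoc u a : Fin (k + 1) → ℝ) - Fin.snoc v b = Fin.snoc (u - v) (a - b) := by
  ext i
  induction i using Fin.lastCases <;> simp

theorem mulVec_snoc_of_last_eq_zero {m : Type*} {C : Matrix m (Fin (k + 1)) ℝ}
    (hC : ∀ i, C i (Fin.last k) = 0) (v : Fin k → ℝ) (a : ℝ) :
    C *ᵥ Fin.snoc v a = C.submatrix id Fin.castSucc *ᵥ v := by
  ext i
  simp [Matrix.mulVec, dotProduct, Fin.sum_univ_castSucc, hC]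

theorem norm_mulVec_snoc_sub_le {m : Type*} [Fintype m] {A B : Matrix m (Fin (k + 1)) ℝ}
    (hbias : ∀ i, A i (Fin.last k) = B i (Fin.last k)) {ε : ℝ} (hε : 0 ≤ ε)
    (hAB : ∀ i j, |A i j - B i j| ≤ ε) (u v : Fin k → ℝ) :
    ‖A *ᵥ Fin.snoc u 1 - B *ᵥ Fin.snoc v 1‖ ≤ opNormInf A * ‖u - v‖ + k * ε * ‖v‖ := by
  have hsplit : A *ᵥ Fin.snoc u 1 - B *ᵥ Fin.snoc v 1 =
      A *ᵥ Fin.snoc (u - v) 0 + (A - B).submatrix id Fin.castSucc *ᵥ v := by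
    rw [← mulVec_snoc_of_last_eq_zero (by simp [hbias]) v 1, Matrix.sub_mulVec,
      ← sub_self (1 : ℝ), ← snoc_sub_snoc, Matrix.mulVec_sub]
    abel
  calc ‖A *ᵥ Fin.snoc u 1 - B *ᵥ Fin.snoc v 1‖
      ≤ ‖A *ᵥ Fin.snoc (u - v) 0‖ + ‖(A - B).submatrix id Fin.castSucc *ᵥ v‖ :=
        hsplit ▸ norm_add_le _ _
    _ ≤ opNormInf A * ‖u - v‖ + k * ε * ‖v‖ := by
        gcongr
        · refine (norm_mulVec_le_opNormInf_mul _ _).trans ?_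
          gcongr
          · exact opNormInf_nonneg A
          · simpa using norm_snoc_le (u - v) 0
        · simpa only [Fintype.card_fin] using
            norm_mulVec_le_of_abs_le (C := (A - B).submatrix id Fin.castSucc) hε
              (fun i j => hAB i j.castSucc) v

end Snoc

section SuffixProd

open Finset

variable (r : ℕ → ℝ)

noncomputable def maxSuffixProd (l : ℕ) : ℝ :=
  (range (max l 1)).sup' (nonempty_range_iff.mpr (by omega)) fun i => ∏ j ∈ Ico i l, r j

theorem maxSuffixProd_zero : maxSuffixProd r 0 = 1 := by
  simp [maxSuffixProd]

theorem mul_max_maxSuffixProd_one_le {l : ℕ} (hr : 0 ≤ r l) :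
    r l * max (maxSuffixProd r l) 1 ≤ maxSuffixProd r (l + 1) := by
  obtain ⟨i, hi, hmax⟩ := exists_mem_eq_sup' (nonempty_range_iff.mpr (by omega : max l 1 ≠ 0))
    fun i => ∏ j ∈ Ico i l, r j
  have hil : i ≤ l := by simp only [mem_range] at hi; omega
  have hle : ∀ i ≤ l, ∏ j ∈ Ico i (l + 1), r j ≤ maxSuffixProd r (l + 1) := fun i hi =>
    le_sup' (fun i => ∏ j ∈ Ico i (l + 1), r j) (mem_range.2 (by omega))
  rw [mul_max_of_nonneg _ _ hr, mul_one]
  refine max_le ?_ ?_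
  · simpa [maxSuffixProd, hmax, prod_Ico_succ_top hil, mul_comm] using hle i hil
  · simpa using hle l le_rfl

theorem prod_Ico_mul_maxSuffixProd_le {l L : ℕ} (hl : l < L) :
    (∏ j ∈ Ico (l + 1) L, r j) * maxSuffixProd r l ≤
      (range (max l 1)).sup' (nonempty_range_iff.mpr (by omega))
        fun i => ∏ j ∈ (Icc i (L - 1)).erase l, r j := by
  obtain ⟨i, hi, hmax⟩ := exists_mem_eq_sup' (nonempty_range_iff.mpr (by omega : max l 1 ≠ 0))
    fun i => ∏ j ∈ Ico i l, r j
  have hil : i ≤ l := by simp only [mem_range] at hi; omega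
  have hsplit : (Icc i (L - 1)).erase l = Ico i l ∪ Ico (l + 1) L := by
    ext j
    simp only [mem_erase, mem_Icc, mem_union, mem_Ico]
    omega
  have hdisj : Disjoint (Ico i l) (Ico (l + 1) L) :=
    disjoint_left.2 fun j h₁ h₂ => by simp only [mem_Ico] at h₁ h₂; omega
  calc (∏ j ∈ Ico (l + 1) L, r j) * maxSuffixProd r l
      = ∏ j ∈ (Icc i (L - 1)).erase l, r j := by
        rw [maxSuffixProd, hmax, hsplit, prod_union hdisj, mul_comm]
    _ ≤ _ := le_sup' (fun i => ∏ j ∈ (Icc i (L - 1)).erase l, r j) hi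

end SuffixProd

section Network

open Finset

variable {σ : ℝ → ℝ} {N : ℕ → ℕ} {W W' : ∀ ℓ : ℕ, Matrix (Fin (N (ℓ + 1))) (Fin (N ℓ + 1)) ℝ}
  {r : ℕ → ℝ}

theorem norm_comp_sub_comp_le {ι : Type*} [Fintype ι] (hσ : LipschitzWith 1 σ) (u v : ι → ℝ) :
    ‖σ ∘ u - σ ∘ v‖ ≤ ‖u - v‖ :=
  (pi_norm_le_iff_of_nonneg (norm_nonneg _)).2 fun i =>
    (show ‖σ (u i) - σ (v i)‖ ≤ ‖u i - v i‖ by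
      simpa using hσ.norm_sub_le (u i) (v i)).trans (norm_le_pi_norm (u - v) i)

theorem norm_comp_le {ι : Type*} [Fintype ι] (hσ : LipschitzWith 1 σ) (hσ0 : σ 0 = 0)
    (u : ι → ℝ) : ‖σ ∘ u‖ ≤ ‖u‖ := by
  have h := norm_comp_sub_comp_le hσ u 0
  rwa [show σ ∘ (0 : ι → ℝ) = 0 from funext fun _ => hσ0, sub_zero, sub_zero] at h

theorem realizeAug_succ (L : ℕ) (x : Fin (N 0) → ℝ) :
    realizeAug σ N W (L + 1) x = σ ∘ (W L *ᵥ Fin.snoc (realizeAug σ N W L x) 1) :=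
  rfl

theorem paramDistAug_nonneg (L : ℕ) : 0 ≤ paramDistAug N L W W' :=
  Real.sSup_nonneg (by rintro _ ⟨ℓ, -, i, j, rfl⟩; exact abs_nonneg _)

theorem abs_sub_le_paramDistAug {L ℓ : ℕ} (hℓ : ℓ < L) (i : Fin (N (ℓ + 1))) (j : Fin (N ℓ + 1)) :
    |W ℓ i j - W' ℓ i j| ≤ paramDistAug N L W W' := by
  have hfin : {c : ℝ | ∃ ℓ < L, ∃ i j, c = |W ℓ i j - W' ℓ i j|}.Finite :=
    (Set.finite_range fun p : Σ ℓ : Fin L, Fin (N (ℓ + 1)) × Fin (N ℓ + 1) =>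
      |W p.1 p.2.1 p.2.2 - W' p.1 p.2.1 p.2.2|).subset
      (by rintro _ ⟨ℓ, hℓ, i, j, rfl⟩; exact ⟨⟨⟨ℓ, hℓ⟩, i, j⟩, rfl⟩)
  exact le_csSup hfin.bddAbove ⟨ℓ, hℓ, i, j, rfl⟩

variable {x : Fin (N 0) → ℝ} {c : ℝ}

theorem norm_realizeAug_le (hσ : LipschitzWith 1 σ) (hσ0 : σ 0 = 0) (hxc : ‖x‖ ≤ c)
    (hc : 1 ≤ c) {L : ℕ} (hW : ∀ ℓ < L, opNormInf (W ℓ) ≤ r ℓ) :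
    ‖realizeAug σ N W L x‖ ≤ c * maxSuffixProd r L := by
  induction L with
  | zero => simpa [realizeAug, maxSuffixProd_zero] using hxc
  | succ L ih =>
    have hr : 0 ≤ r L := (opNormInf_nonneg _).trans (hW L L.lt_succ_self)
    have ih := ih fun ℓ hℓ => hW ℓ (hℓ.trans L.lt_succ_self)
    calc ‖realizeAug σ N W (L + 1) x‖
        ≤ ‖W L *ᵥ Fin.snoc (realizeAug σ N W L x) 1‖ := norm_comp_le hσ hσ0 _
      _ ≤ r L * max ‖realizeAug σ N W L x‖ 1 := by
          refine (norm_mulVec_le_opNormInf_mul _ _).trans ?_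
          gcongr
          · exact hW L L.lt_succ_self
          · simpa using norm_snoc_le (realizeAug σ N W L x) 1
      _ ≤ r L * (c * max (maxSuffixProd r L) 1) := by
          rw [mul_max_of_nonneg _ _ (by linarith : 0 ≤ c), mul_one]
          gcongr
      _ = c * (r L * max (maxSuffixProd r L) 1) := by ring
      _ ≤ c * maxSuffixProd r (L + 1) := by
          gcongr
          exact mul_max_maxSuffixProd_one_le r hr

theorem norm_realizeAug_sub_le (hσ : LipschitzWith 1 σ) (hσ0 : σ 0 = 0) (hxc : ‖x‖ ≤ c)
    (hc : 1 ≤ c) {L : ℕ}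
    (hbias : ∀ ℓ < L, ∀ i, W ℓ i (Fin.last (N ℓ)) = W' ℓ i (Fin.last (N ℓ)))
    (hW : ∀ ℓ < L, opNormInf (W ℓ) ≤ r ℓ) (hW' : ∀ ℓ < L, opNormInf (W' ℓ) ≤ r ℓ)
    {ε : ℝ} (hε : 0 ≤ ε) (hWW' : ∀ ℓ < L, ∀ i j, |W ℓ i j - W' ℓ i j| ≤ ε) :
    ‖realizeAug σ N W L x - realizeAug σ N W' L x‖ ≤
      ε * c * ∑ l ∈ range L, N l * ((∏ j ∈ Ico (l + 1) L, r j) * maxSuffixProd r l) := by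
  induction L with
  | zero => simp [realizeAug]
  | succ L ih =>
    have hL := L.lt_succ_self
    have hr : 0 ≤ r L := (opNormInf_nonneg _).trans (hW L hL)
    have ih := ih (fun ℓ hℓ => hbias ℓ (hℓ.trans hL)) (fun ℓ hℓ => hW ℓ (hℓ.trans hL))
      (fun ℓ hℓ => hW' ℓ (hℓ.trans hL)) (fun ℓ hℓ => hWW' ℓ (hℓ.trans hL))
    have hgrowth := norm_realizeAug_le hσ hσ0 hxc hc fun ℓ hℓ => hW' ℓ (hℓ.trans hL)
    have hsum : ∑ l ∈ range (L + 1), N l * ((∏ j ∈ Ico (l + 1) (L + 1), r j) * maxSuffixProd r l)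
        = r L * ∑ l ∈ range L, N l * ((∏ j ∈ Ico (l + 1) L, r j) * maxSuffixProd r l)
          + N L * maxSuffixProd r L := by
      rw [sum_range_succ, mul_sum, Ico_self, prod_empty, one_mul]
      congr 1
      refine sum_congr rfl fun l hl => ?_
      rw [prod_Ico_succ_top (mem_range.1 hl)]
      ring
    rw [realizeAug_succ, realizeAug_succ, hsum]
    calc _ ≤ ‖W L *ᵥ Fin.snoc (realizeAug σ N W L x) 1 -
            W' L *ᵥ Fin.snoc (realizeAug σ N W' L x) 1‖ := norm_comp_sub_comp_le hσ _ _
      _ ≤ opNormInf (W L) * ‖realizeAug σ N W L x - realizeAug σ N W' L x‖ +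
            N L * ε * ‖realizeAug σ N W' L x‖ :=
          norm_mulVec_snoc_sub_le (hbias L hL) hε (hWW' L hL) _ _
      _ ≤ r L * (ε * c * ∑ l ∈ range L, N l * ((∏ j ∈ Ico (l + 1) L, r j) * maxSuffixProd r l))
            + N L * ε * (c * maxSuffixProd r L) := by
          gcongr
          exact hW L hL
      _ = _ := by ring

end Network

/-- Layer `ℓ + 1` of the paper is layer `ℓ ∈ {0, …, L - 1}` here, and correspondingly the indices
`l, i, j` of `M` are shifted down by one. -/
theorem statement0 (L : ℕ) (hL : 1 ≤ L) (N : ℕ → ℕ)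
    (W W' : ∀ ℓ : ℕ, Matrix (Fin (N (ℓ + 1))) (Fin (N ℓ + 1)) ℝ)
    (hbias : ∀ ℓ < L, ∀ i, W ℓ i (Fin.last (N ℓ)) = W' ℓ i (Fin.last (N ℓ)))
    (r : ℕ → ℝ)
    (hW : ∀ ℓ < L, opNormInf (W ℓ) ≤ r ℓ)
    (hW' : ∀ ℓ < L, opNormInf (W' ℓ) ≤ r ℓ)
    (D : ℝ) (x : Fin (N 0) → ℝ) (hx : ∀ i, |x i| ≤ D) :
    ‖realizeAug (fun t => max 0 t) N W L x - realizeAug (fun t => max 0 t) N W' L x‖ ≤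
      max D 1 * (∑ ℓ ∈ Finset.range L, (N ℓ : ℝ)) *
        ((Finset.range L).sup' (Finset.nonempty_range_iff.mpr (by omega))
          (fun l => (Finset.range (max l 1)).sup' (Finset.nonempty_range_iff.mpr (by omega))
            (fun i => ∏ j ∈ (Finset.Icc i (L - 1)).erase l, r j))) *
        paramDistAug N L W W' := by
  set M := (Finset.range L).sup' (Finset.nonempty_range_iff.mpr (by omega))
    (fun l => (Finset.range (max l 1)).sup' (Finset.nonempty_range_iff.mpr (by omega))
      (fun i => ∏ j ∈ (Finset.Icc i (L - 1)).erase l, r j))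
  have hxD : ‖x‖ ≤ max D 1 :=
    (pi_norm_le_iff_of_nonneg (by positivity)).2 fun i => (hx i).trans (le_max_left D 1)
  have hsum : ∑ l ∈ Finset.range L, N l * ((∏ j ∈ Finset.Ico (l + 1) L, r j) * maxSuffixProd r l)
      ≤ (∑ l ∈ Finset.range L, (N l : ℝ)) * M := by
    rw [Finset.sum_mul]
    refine Finset.sum_le_sum fun l hl => ?_
    gcongr
    exact Finset.le_sup'_of_le _ hl (prod_Ico_mul_maxSuffixProd_le r (Finset.mem_range.1 hl))
  calc _ ≤ paramDistAug N L W W' * max D 1 *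
        ∑ l ∈ Finset.range L, N l * ((∏ j ∈ Finset.Ico (l + 1) L, r j) * maxSuffixProd r l) :=
        norm_realizeAug_sub_le (LipschitzWith.id.const_max 0) (by simp) hxD (le_max_right D 1)
          hbias hW hW' (paramDistAug_nonneg L) fun ℓ hℓ => abs_sub_le_paramDistAug hℓ
    _ ≤ paramDistAug N L W W' * max D 1 * ((∑ l ∈ Finset.range L, (N l : ℝ)) * M) := by
        have := paramDistAug_nonneg (W := W) (W' := W') L
        gcongr
    _ = _ := by ring
end

section
/- Let L ≥ 1, let r ≥ 1, let N := max_{l=0,…,L} N_l, and let θ = (W̃_1,…,W̃_L) and θ' = (W̃'_1,…,W̃'_L) be parameters of two ReLU networks with the same architecture (L, (N_0,…,N_L)) satisfying ‖W̃_ℓ‖_{op,∞} ≤ r and ‖W̃'_ℓ‖_{op,∞} ≤ r for all ℓ = 1,…,L. Then for every D > 0, sup over x ∈ [−D,D]^{N_0} of ‖R_θ(x̃) − R_{θ'}(x̃)‖_∞ is at most (D+1) · N · L² · r^{L−1} · ‖θ − θ'‖_∞. -/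
lemma opNormInf_bddAbove {m n : Type*} [Fintype m] [Fintype n] (A : Matrix m n ℝ) :
    BddAbove ((fun x : n → ℝ => ‖A.mulVec x‖) '' {x | ‖x‖ = 1}) := by
  refine ⟨∑ i, ∑ j, |A i j|, ?_⟩
  rintro c ⟨x, hx, rfl⟩
  simp only [Set.mem_setOf_eq] at hx
  have hC : (0:ℝ) ≤ ∑ i, ∑ j, |A i j| := by positivity
  rw [pi_norm_le_iff_of_nonneg hC]
  intro i
  have h1 : |(A.mulVec x) i| ≤ ∑ j, |A i j| := by
    simp only [Matrix.mulVec, dotProduct]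
    refine (Finset.abs_sum_le_sum_abs _ _).trans (Finset.sum_le_sum fun j _ => ?_)
    rw [abs_mul]
    have := norm_le_pi_norm x j
    simp only [Real.norm_eq_abs] at this
    nlinarith [abs_nonneg (A i j), abs_nonneg (x j)]
  rw [Real.norm_eq_abs]
  refine h1.trans (Finset.single_le_sum (f := fun i => ∑ j, |A i j|) (fun i _ => ?_) (Finset.mem_univ i))
  positivity

lemma norm_mulVec_le {m k : ℕ} (A : Matrix (Fin m) (Fin (k+1)) ℝ) (v : Fin (k+1) → ℝ) :
    ‖A.mulVec v‖ ≤ opNormInf A * ‖v‖ := by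
  by_cases hv : ‖v‖ = 0
  · rw [norm_eq_zero] at hv
    simp [hv, Matrix.mulVec_zero]
  · have hv0 : 0 < ‖v‖ := lt_of_le_of_ne (norm_nonneg v) (Ne.symm hv)
    set u : Fin (k+1) → ℝ := ‖v‖⁻¹ • v with hu
    have hu1 : ‖u‖ = 1 := by
      rw [hu, norm_smul, norm_inv, norm_norm, inv_mul_cancel₀ hv]
    have hmem : ‖A.mulVec u‖ ≤ opNormInf A :=
      le_csSup (opNormInf_bddAbove A) ⟨u, hu1, rfl⟩
    have heq : A.mulVec v = ‖v‖ • A.mulVec u := by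
      rw [hu, Matrix.mulVec_smul, smul_smul, mul_inv_cancel₀ hv, one_smul]
    rw [heq, norm_smul, norm_norm, mul_comm]
    exact mul_le_mul_of_nonneg_right hmem hv0.le

lemma relu_lip (s t : ℝ) : |max 0 s - max 0 t| ≤ |s - t| := by
  rw [max_comm 0 s, max_comm 0 t]
  exact abs_max_sub_max_le_abs s t 0

lemma relu_abs (t : ℝ) : |max 0 t| ≤ |t| := by
  rcases le_total 0 t with h | h
  · rw [max_eq_right h]
  · rw [max_eq_left h]; simp [abs_nonneg t]

lemma snoc_norm_le {k : ℕ} (y : Fin k → ℝ) :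
    ‖(Fin.snoc y 1 : Fin (k+1) → ℝ)‖ ≤ max ‖y‖ 1 := by
  rw [pi_norm_le_iff_of_nonneg (le_trans zero_le_one (le_max_right _ _))]
  intro i
  induction i using Fin.lastCases with
  | last => simp [Fin.snoc_last]
  | cast j =>
    rw [Fin.snoc_castSucc]
    exact (norm_le_pi_norm y j).trans (le_max_left _ _)

lemma snoc_sub_norm_le {k : ℕ} (y y' : Fin k → ℝ) :
    ‖(Fin.snoc y 1 - Fin.snoc y' 1 : Fin (k+1) → ℝ)‖ ≤ ‖y - y'‖ := by
  rw [pi_norm_le_iff_of_nonneg (norm_nonneg _)]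
  intro i
  induction i using Fin.lastCases with
  | last => simp [Fin.snoc_last]
  | cast j =>
    have : (Fin.snoc y 1 - Fin.snoc y' 1 : Fin (k+1) → ℝ) j.castSucc = (y - y') j := by
      simp [Fin.snoc_castSucc]
    rw [this]
    exact norm_le_pi_norm (y - y') j

/-- previous bound of Gonon et al.: for ReLU networks with `‖W̃_ℓ‖_{op,∞} ≤ r`
for all layers, `r ≥ 1`, and `N = max_{l=0,…,L} N_l`, for every `x ∈ [-D,D]^{N 0}`,
`‖R_θ(x̃) - R_{θ'}(x̃)‖∞ ≤ (D+1) · N · L² · r^{L-1} · ‖θ - θ'‖∞`. -/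
theorem statement9 (L : ℕ) (hL : 1 ≤ L) (N : ℕ → ℕ)
    (W W' : ∀ ℓ : ℕ, Matrix (Fin (N (ℓ + 1))) (Fin (N ℓ + 1)) ℝ)
    (r : ℝ) (hr : 1 ≤ r)
    (hW : ∀ ℓ < L, opNormInf (W ℓ) ≤ r)
    (hW' : ∀ ℓ < L, opNormInf (W' ℓ) ≤ r)
    (D : ℝ) (hD : 0 < D) (x : Fin (N 0) → ℝ) (hx : ∀ i, |x i| ≤ D) :
    ‖realizeAug (fun t => max 0 t) N W L x - realizeAug (fun t => max 0 t) N W' L x‖ ≤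
      (D + 1) * (((Finset.range (L + 1)).sup N : ℕ) : ℝ) * (L : ℝ) ^ 2 * r ^ (L - 1) *
        paramDistAug N L W W' := by
  set σ : ℝ → ℝ := fun t => max 0 t with hσ
  set Nmax : ℕ := (Finset.range (L+1)).sup N with hNmaxdef
  by_cases hN0 : Nmax = 0
  · have hNL : N L = 0 := by
      have : N L ≤ Nmax := Finset.le_sup (Finset.mem_range.mpr (Nat.lt_succ_self L))
      omega
    have hz : realizeAug σ N W L x - realizeAug σ N W' L x = 0 := by
      funext i
      exact absurd i.isLt (by omega)
    rw [hz, norm_zero, hN0]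
    simp
  · have hN1 : (1:ℝ) ≤ (Nmax:ℝ) := by exact_mod_cast Nat.one_le_iff_ne_zero.mpr hN0
    set ε := paramDistAug N L W W' with hεdef
    have hSbdd : BddAbove {c : ℝ | ∃ ℓ < L, ∃ i j, c = |W ℓ i j - W' ℓ i j|} := by
      apply Set.Finite.bddAbove
      have hsub : {c : ℝ | ∃ ℓ < L, ∃ i j, c = |W ℓ i j - W' ℓ i j|} ⊆
          Set.range (fun p : Σ ℓ : Fin L, Fin (N (ℓ.1+1)) × Fin (N ℓ.1 + 1) =>
            |W p.1 p.2.1 p.2.2 - W' p.1 p.2.1 p.2.2|) := by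
        rintro c ⟨ℓ, hℓ, i, j, rfl⟩
        exact ⟨⟨⟨ℓ, hℓ⟩, i, j⟩, rfl⟩
      exact (Set.finite_range _).subset hsub
    have hεle : ∀ ℓ, ℓ < L → ∀ i j, |W ℓ i j - W' ℓ i j| ≤ ε := fun ℓ hℓ i j =>
      le_csSup hSbdd ⟨ℓ, hℓ, i, j, rfl⟩
    have hε0 : 0 ≤ ε := by
      by_cases hne : {c : ℝ | ∃ ℓ < L, ∃ i j, c = |W ℓ i j - W' ℓ i j|}.Nonempty
      · obtain ⟨c, ℓ, hℓ, i, j, rfl⟩ := hne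
        exact le_trans (abs_nonneg _) (hεle ℓ hℓ i j)
      · rw [hεdef, paramDistAug, Set.not_nonempty_iff_eq_empty.mp hne, Real.sSup_empty]
    have hr0 : (0:ℝ) ≤ r := le_trans zero_le_one hr
    have hxD : ‖x‖ ≤ D := by
      rw [pi_norm_le_iff_of_nonneg hD.le]
      intro i; rw [Real.norm_eq_abs]; exact hx i
    -- growth bound
    have grow : ∀ ℓ, ℓ ≤ L → ‖realizeAug σ N W ℓ x‖ ≤ r ^ ℓ * max D 1 := by
      intro ℓ
      induction ℓ with
      | zero =>
        intro _
        rw [pow_zero, one_mul]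
        exact le_trans hxD (le_max_left _ _)
      | succ ℓ ih =>
        intro hℓ1
        have hℓ : ℓ < L := hℓ1
        have hy := ih hℓ.le
        set y := realizeAug σ N W ℓ x with hy'
        have hstep : realizeAug σ N W (ℓ+1) x
            = fun i => σ ((W ℓ).mulVec (Fin.snoc y 1) i) := rfl
        have h1 : ‖realizeAug σ N W (ℓ+1) x‖ ≤ ‖(W ℓ).mulVec (Fin.snoc y 1)‖ := by
          rw [hstep, pi_norm_le_iff_of_nonneg (norm_nonneg _)]
          intro i
          rw [Real.norm_eq_abs]
          refine (relu_abs _).trans ?_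
          rw [← Real.norm_eq_abs]
          exact norm_le_pi_norm _ i
        have h2 : ‖(W ℓ).mulVec (Fin.snoc y 1)‖ ≤ r * (r ^ ℓ * max D 1) := by
          refine (norm_mulVec_le _ _).trans ?_
          have hmax : max ‖y‖ 1 ≤ r ^ ℓ * max D 1 := by
            refine max_le hy ?_
            have h1r : (1:ℝ) ≤ r ^ ℓ := one_le_pow₀ hr
            nlinarith [le_max_right D 1]
          calc opNormInf (W ℓ) * ‖(Fin.snoc y 1 : Fin (N ℓ + 1) → ℝ)‖
              ≤ r * (max ‖y‖ 1) := by
                refine mul_le_mul (hW ℓ hℓ) (snoc_norm_le y) (norm_nonneg _) hr0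
            _ ≤ r * (r ^ ℓ * max D 1) := by
                refine mul_le_mul_of_nonneg_left hmax hr0
        refine (h1.trans h2).trans (le_of_eq ?_)
        rw [pow_succ]; ring
    -- one-step error bound
    have step : ∀ ℓ, ℓ < L →
        ‖realizeAug σ N W (ℓ+1) x - realizeAug σ N W' (ℓ+1) x‖ ≤
          ε * ((N ℓ : ℝ) * ‖realizeAug σ N W ℓ x‖ + 1)
            + r * ‖realizeAug σ N W ℓ x - realizeAug σ N W' ℓ x‖ := by
      intro ℓ hℓ
      set y := realizeAug σ N W ℓ x with hydef
      set y' := realizeAug σ N W' ℓ x with hy'def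
      set u : Fin (N ℓ + 1) → ℝ := Fin.snoc y 1 with hudef
      set u' : Fin (N ℓ + 1) → ℝ := Fin.snoc y' 1 with hu'def
      have hRHS0 : 0 ≤ ε * ((N ℓ : ℝ) * ‖y‖ + 1) + r * ‖y - y'‖ := by
        refine add_nonneg (mul_nonneg hε0 (by positivity)) (mul_nonneg hr0 (norm_nonneg _))
      rw [pi_norm_le_iff_of_nonneg hRHS0]
      intro i
      have hdec : (realizeAug σ N W (ℓ+1) x - realizeAug σ N W' (ℓ+1) x) i
          = max 0 ((W ℓ).mulVec u i) - max 0 ((W' ℓ).mulVec u' i) := rfl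
      rw [Real.norm_eq_abs, hdec]
      have hsplit : (W ℓ).mulVec u i - (W' ℓ).mulVec u' i
          = ((W ℓ - W' ℓ).mulVec u) i + ((W' ℓ).mulVec (u - u')) i := by
        rw [Matrix.sub_mulVec, Matrix.mulVec_sub]
        simp only [Pi.sub_apply, Pi.add_apply]
        ring
      have h2 : |((W ℓ - W' ℓ).mulVec u) i| ≤ ε * ((N ℓ : ℝ) * ‖y‖ + 1) := by
        have heq : ((W ℓ - W' ℓ).mulVec u) i = ∑ j, (W ℓ i j - W' ℓ i j) * u j := by
          simp [Matrix.mulVec, dotProduct, Matrix.sub_apply]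
        rw [heq]
        have hbody : ∀ j : Fin (N ℓ), |(W ℓ i j.castSucc - W' ℓ i j.castSucc) * u j.castSucc|
            ≤ ε * ‖y‖ := by
          intro j
          rw [abs_mul]
          have h1 : |u j.castSucc| ≤ ‖y‖ := by
            rw [hudef, Fin.snoc_castSucc, ← Real.norm_eq_abs]
            exact norm_le_pi_norm y j
          exact mul_le_mul (hεle ℓ hℓ i j.castSucc) h1 (abs_nonneg _) hε0
        have hlast : |(W ℓ i (Fin.last _) - W' ℓ i (Fin.last _)) * u (Fin.last _)| ≤ ε := by
          rw [hudef, Fin.snoc_last, mul_one]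
          exact hεle ℓ hℓ i (Fin.last _)
        calc |∑ j, (W ℓ i j - W' ℓ i j) * u j|
            ≤ ∑ j, |(W ℓ i j - W' ℓ i j) * u j| := Finset.abs_sum_le_sum_abs _ _
          _ = ∑ j : Fin (N ℓ), |(W ℓ i j.castSucc - W' ℓ i j.castSucc) * u j.castSucc|
                + |(W ℓ i (Fin.last _) - W' ℓ i (Fin.last _)) * u (Fin.last _)| :=
              Fin.sum_univ_castSucc _
          _ ≤ (N ℓ) • (ε * ‖y‖) + ε := by
              refine add_le_add ?_ hlast
              have := Finset.sum_le_card_nsmul Finset.univ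
                (fun j : Fin (N ℓ) => |(W ℓ i j.castSucc - W' ℓ i j.castSucc) * u j.castSucc|)
                (ε * ‖y‖) (fun j _ => hbody j)
              simpa using this
          _ = ε * ((N ℓ : ℝ) * ‖y‖ + 1) := by
              rw [nsmul_eq_mul]; ring
      have h3 : |((W' ℓ).mulVec (u - u')) i| ≤ r * ‖y - y'‖ := by
        rw [← Real.norm_eq_abs]
        refine (norm_le_pi_norm _ i).trans ?_
        refine (norm_mulVec_le _ _).trans ?_
        exact mul_le_mul (hW' ℓ hℓ) (snoc_sub_norm_le y y') (norm_nonneg _) hr0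
      calc |max 0 ((W ℓ).mulVec u i) - max 0 ((W' ℓ).mulVec u' i)|
          ≤ |(W ℓ).mulVec u i - (W' ℓ).mulVec u' i| := relu_lip _ _
        _ = |((W ℓ - W' ℓ).mulVec u) i + ((W' ℓ).mulVec (u - u')) i| := by rw [hsplit]
        _ ≤ |((W ℓ - W' ℓ).mulVec u) i| + |((W' ℓ).mulVec (u - u')) i| := abs_add_le _ _
        _ ≤ ε * ((N ℓ : ℝ) * ‖y‖ + 1) + r * ‖y - y'‖ := add_le_add h2 h3
    -- main induction
    have main : ∀ ℓ, ℓ ≤ L →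
        ‖realizeAug σ N W ℓ x - realizeAug σ N W' ℓ x‖ ≤
          (D + 1) * (Nmax : ℝ) * (ℓ : ℝ) ^ 2 * r ^ (ℓ - 1) * ε := by
      intro ℓ
      induction ℓ with
      | zero =>
        intro _
        have : realizeAug σ N W 0 x - realizeAug σ N W' 0 x = 0 := sub_self x
        rw [this, norm_zero]
        simp
      | succ ℓ ih =>
        intro hℓ1
        have hℓ : ℓ < L := hℓ1
        have hstep := step ℓ hℓ
        have hyb := grow ℓ hℓ.le
        have hNle : (N ℓ : ℝ) ≤ (Nmax : ℝ) := by
          exact_mod_cast Finset.le_sup (Finset.mem_range.mpr (by omega))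
        have hNn : (0:ℝ) ≤ (N ℓ : ℝ) := Nat.cast_nonneg _
        have hM : max D 1 ≤ D + 1 := max_le (by linarith) (by linarith)
        have hrl : (1:ℝ) ≤ r ^ ℓ := one_le_pow₀ hr
        have hgoalcast : ((ℓ + 1 : ℕ) : ℝ) = (ℓ : ℝ) + 1 := by push_cast; ring
        rw [Nat.add_sub_cancel, hgoalcast]
        rcases Nat.eq_zero_or_pos ℓ with h0 | hpos
        · subst h0
          have he0 : realizeAug σ N W 0 x - realizeAug σ N W' 0 x = 0 := sub_self x
          rw [he0, norm_zero, mul_zero, add_zero] at hstep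
          have hx0 : ‖realizeAug σ N W 0 x‖ ≤ D := hxD
          refine hstep.trans ?_
          have h1 : ε * ((N 0 : ℝ) * ‖realizeAug σ N W 0 x‖ + 1) ≤ ε * ((Nmax:ℝ) * D + 1) := by
            refine mul_le_mul_of_nonneg_left ?_ hε0
            have : (N 0 : ℝ) * ‖realizeAug σ N W 0 x‖ ≤ (Nmax:ℝ) * D := by
              refine mul_le_mul hNle hx0 (norm_nonneg _) (by linarith)
            linarith
          refine h1.trans ?_
          rw [pow_zero]
          norm_num
          nlinarith [mul_nonneg hε0 (by linarith : (0:ℝ) ≤ (Nmax:ℝ) - 1)]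
        · have hpow : r * r ^ (ℓ - 1) = r ^ ℓ := by
            rw [← pow_succ']
            congr 1
            omega
          have hl1 : (1:ℝ) ≤ (ℓ : ℝ) := by exact_mod_cast hpos
          have hyb' : ‖realizeAug σ N W ℓ x‖ ≤ r ^ ℓ * (D + 1) := by
            refine hyb.trans ?_
            nlinarith
          calc ‖realizeAug σ N W (ℓ+1) x - realizeAug σ N W' (ℓ+1) x‖
              ≤ ε * ((N ℓ : ℝ) * ‖realizeAug σ N W ℓ x‖ + 1)
                + r * ‖realizeAug σ N W ℓ x - realizeAug σ N W' ℓ x‖ := hstep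
            _ ≤ ε * ((Nmax:ℝ) * (r ^ ℓ * (D + 1)) + r ^ ℓ * ((Nmax:ℝ) * (D + 1)))
                + r * ((D + 1) * (Nmax : ℝ) * (ℓ : ℝ) ^ 2 * r ^ (ℓ - 1) * ε) := by
                refine add_le_add ?_ (mul_le_mul_of_nonneg_left (ih hℓ.le) hr0)
                refine mul_le_mul_of_nonneg_left ?_ hε0
                refine add_le_add ?_ ?_
                · exact mul_le_mul hNle hyb' (norm_nonneg _) (by linarith)
                · have t1 : (1:ℝ) ≤ (Nmax:ℝ) * (D + 1) := by
                    nlinarith [mul_nonneg (by linarith : (0:ℝ) ≤ (Nmax:ℝ) - 1)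
                      (by linarith : (0:ℝ) ≤ D + 1)]
                  calc (1:ℝ) ≤ r ^ ℓ := hrl
                    _ ≤ r ^ ℓ * ((Nmax:ℝ) * (D + 1)) :=
                        le_mul_of_one_le_right (by linarith) t1
            _ = (D + 1) * (Nmax:ℝ) * r ^ ℓ * ε * 2
                + (D + 1) * (Nmax : ℝ) * (ℓ : ℝ) ^ 2 * (r * r ^ (ℓ - 1)) * ε := by ring
            _ = (D + 1) * (Nmax:ℝ) * r ^ ℓ * ε * 2
                + (D + 1) * (Nmax : ℝ) * (ℓ : ℝ) ^ 2 * r ^ ℓ * ε := by rw [hpow]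
            _ ≤ (D + 1) * (Nmax:ℝ) * ((ℓ : ℝ) + 1) ^ 2 * r ^ ℓ * ε := by
                have key : 0 ≤ (D + 1) * (Nmax:ℝ) * r ^ ℓ * ε * (2 * (ℓ:ℝ) - 1) := by
                  refine mul_nonneg (mul_nonneg (mul_nonneg (mul_nonneg ?_ ?_) ?_) hε0) ?_
                  · linarith
                  · linarith
                  · linarith
                  · linarith
                nlinarith [key]
    have := main L le_rfl
    exact this
end
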